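/- Let X_μ ~ ESN(μ, σ², ε) with 0 < μ < c, σ > 0, ε ∈ (−1,1), Z_μ = max(X_μ, 0), and Z̄_μ = min(Z_μ, c). Then E[Z_μ − Z̄_μ] = (1−ε)²·φ((c−μ)/((1−ε)σ))·σ − (1−ε)·[1 − Φ((c−μ)/((1−ε)σ))]·(c−μ). -/

import Mathlib

/-!
Since `0 < μ < c`, the clipped excess `Z_μ - Z̄_μ` is `(X_μ - c)⁺`, and on `x > c ≥ μ` only the
right half `φ((x - μ)/s)/σ`, `s = (1 - ε)σ`, of the split-normal density is seen. The remaining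
stop-loss integral `∫_c^∞ (x - c) φ((x - μ)/s) dx` is computed from the antiderivative
`-s² φ((x - μ)/s) - s (c - μ) Φ((x - μ)/s)`, using `φ' t = -t φ t`.
-/

open MeasureTheory Real Set ProbabilityTheory

noncomputable def phi (t : ℝ) : ℝ := Real.exp (-t^2/2) / Real.sqrt (2*Real.pi)
noncomputable def Phi (t : ℝ) : ℝ := ∫ u in Set.Iic t, phi u

noncomputable def esnPdf (μ σ ε x : ℝ) : ℝ :=
  if x < μ then phi ((x-μ) / ((1+ε)*σ)) / σ else phi ((x-μ) / ((1-ε)*σ)) / σ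

open Filter Topology

lemma continuous_phi : Continuous phi := by
  unfold phi; fun_prop

lemma integrable_phi : Integrable phi := by
  refine ((integrable_exp_neg_mul_sq (by norm_num : (0:ℝ) < 2⁻¹)).div_const
    (Real.sqrt (2*Real.pi))).congr (Eventually.of_forall fun x => ?_)
  unfold phi; ring_nf

lemma integrable_mul_phi : Integrable fun t => t * phi t := by
  refine ((integrable_mul_exp_neg_mul_sq (by norm_num : (0:ℝ) < 2⁻¹)).div_const
    (Real.sqrt (2*Real.pi))).congr (Eventually.of_forall fun x => ?_)
  unfold phi; ring_nf

lemma integral_phi : ∫ x, phi x = 1 := by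
  have hgauss : ∫ x : ℝ, Real.exp (-(2⁻¹) * x^2) = Real.sqrt (2 * Real.pi) := by
    rw [integral_gaussian, div_inv_eq_mul, mul_comm]
  have hphi : phi = fun x => Real.exp (-(2⁻¹) * x^2) / Real.sqrt (2*Real.pi) := by
    funext x; unfold phi; ring_nf
  rw [hphi, integral_div, hgauss, div_self (by positivity)]

lemma hasDerivAt_phi (x : ℝ) : HasDerivAt phi (-x * phi x) x := by
  have hexp : HasDerivAt (fun t : ℝ => -t^2/2) (-x) x :=
    ((hasDerivAt_pow 2 x).neg.div_const 2).congr_deriv (by ring)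
  exact (((Real.hasDerivAt_exp _).comp x hexp).div_const _).congr_deriv (by unfold phi; ring)

lemma hasDerivAt_Phi (x : ℝ) : HasDerivAt Phi (phi x) x := by
  have hsplit : ∀ y : ℝ, Phi 0 + ∫ t in (0:ℝ)..y, phi t = Phi y := fun y => by
    rw [Phi, Phi, ← intervalIntegral.integral_Iic_sub_Iic integrable_phi.integrableOn
      integrable_phi.integrableOn]
    ring
  refine HasDerivAt.congr_of_eventuallyEq ?_ (Eventually.of_forall fun y => (hsplit y).symm)
  exact (intervalIntegral.integral_hasDerivAt_right integrable_phi.intervalIntegrable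
    continuous_phi.stronglyMeasurable.stronglyMeasurableAtFilter
    continuous_phi.continuousAt).const_add _

lemma tendsto_Phi_atTop : Tendsto Phi atTop (𝓝 1) := by
  have h := (aecover_Iic (μ := volume) tendsto_id).integral_tendsto_of_countably_generated
    integrable_phi
  rwa [integral_phi] at h

lemma tendsto_phi_atTop : Tendsto phi atTop (𝓝 0) := by
  have hsq : Tendsto (fun x : ℝ => -x^2/2) atTop atBot :=
    (tendsto_neg_atTop_atBot.comp (tendsto_pow_atTop two_ne_zero)).atBot_div_const two_pos
  have h := (Real.tendsto_exp_atBot.comp hsq).div_const (Real.sqrt (2*Real.pi))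
  rwa [zero_div] at h

section StopLoss

noncomputable def stopLossAntideriv (μ c s y : ℝ) : ℝ :=
  -s^2 * phi ((y - μ) / s) - s * (c - μ) * Phi ((y - μ) / s)

variable (μ c : ℝ) {s : ℝ}

lemma integrable_sub_mul_phi_div (hs : 0 < s) :
    Integrable fun x => (x - c) * phi ((x - μ) / s) := by
  have hmean := ((integrable_mul_phi.comp_div hs.ne').comp_sub_right μ).const_mul s
  have hmass := ((integrable_phi.comp_div hs.ne').comp_sub_right μ).const_mul (μ - c)
  refine (hmean.add hmass).congr (Eventually.of_forall fun x => ?_)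
  simp only [Pi.add_apply]
  field_simp
  ring

lemma hasDerivAt_stopLossAntideriv (hs : 0 < s) (x : ℝ) :
    HasDerivAt (stopLossAntideriv μ c s) ((x - c) * phi ((x - μ) / s)) x := by
  have hlin : HasDerivAt (fun y : ℝ => (y - μ) / s) (1 / s) x := by
    simpa using ((hasDerivAt_id x).sub_const μ).div_const s
  have hphi := (hasDerivAt_phi _).comp x hlin
  have hPhi := (hasDerivAt_Phi _).comp x hlin
  refine ((hphi.const_mul (-s^2)).sub (hPhi.const_mul (s * (c - μ)))).congr_deriv ?_
  field_simp
  ring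

lemma tendsto_stopLossAntideriv_atTop (hs : 0 < s) :
    Tendsto (stopLossAntideriv μ c s) atTop (𝓝 (-(s * (c - μ)))) := by
  have hlin : Tendsto (fun y : ℝ => (y - μ) / s) atTop atTop :=
    (tendsto_atTop_add_const_right _ (-μ) tendsto_id).atTop_div_const hs
  have h := ((tendsto_phi_atTop.comp hlin).const_mul (-s^2)).sub
    ((tendsto_Phi_atTop.comp hlin).const_mul (s * (c - μ)))
  rwa [mul_zero, mul_one, zero_sub] at h

lemma integral_Ioi_sub_mul_phi_div (hs : 0 < s) :
    ∫ x in Ioi c, (x - c) * phi ((x - μ) / s)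
      = s^2 * phi ((c - μ) / s) - s * (c - μ) * (1 - Phi ((c - μ) / s)) := by
  rw [integral_Ioi_of_hasDerivAt_of_tendsto'
    (fun x _ => hasDerivAt_stopLossAntideriv μ c hs x)
    (integrable_sub_mul_phi_div μ c hs).integrableOn (tendsto_stopLossAntideriv_atTop μ c hs),
    stopLossAntideriv]
  ring

end StopLoss

lemma max_zero_sub_min_max_zero {c : ℝ} (hc : 0 ≤ c) (x : ℝ) :
    max x 0 - min (max x 0) c = max (x - c) 0 := by
  rcases le_total x c with hxc | hcx
  · rw [min_eq_left (max_le hxc hc), sub_self, max_eq_right (sub_nonpos.mpr hxc)]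
  · rw [min_eq_right (hcx.trans (le_max_left x 0)), max_eq_left (hc.trans hcx),
      max_eq_left (sub_nonneg.mpr hcx)]

lemma max_sub_zero_mul_esnPdf {μ σ ε c : ℝ} (hμc : μ ≤ c) :
    (fun x => max (x - c) 0 * esnPdf μ σ ε x)
      = (Ioi c).indicator fun x => (x - c) * phi ((x - μ) / ((1 - ε) * σ)) / σ := by
  funext x
  by_cases hx : x ∈ Ioi c
  · rw [indicator_of_mem hx, esnPdf, if_neg (not_lt.mpr (hμc.trans hx.le)),
      max_eq_left (sub_nonneg.mpr hx.le), mul_div]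
  · rw [indicator_of_notMem hx, max_eq_right (sub_nonpos.mpr (not_lt.mp hx)), zero_mul]

theorem stmt10_general (μ σ ε c : ℝ) (hμ : 0 < μ) (hμc : μ < c) (hσ : 0 < σ)
    (hε2 : ε < 1) :
    (∫ x : ℝ, (max x 0 - min (max x 0) c) * esnPdf μ σ ε x)
      = (1-ε)^2 * phi ((c-μ)/((1-ε)*σ)) * σ
        - (1-ε) * (1 - Phi ((c-μ)/((1-ε)*σ))) * (c-μ) := by
  have hs : 0 < (1 - ε) * σ := mul_pos (by linarith) hσ
  simp_rw [max_zero_sub_min_max_zero (hμ.trans hμc).le]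
  rw [max_sub_zero_mul_esnPdf hμc.le, integral_indicator measurableSet_Ioi, integral_div,
    integral_Ioi_sub_mul_phi_div μ c hs]
  field_simp

theorem stmt10 (μ σ ε c : ℝ) (hμ : 0 < μ) (hμc : μ < c) (hσ : 0 < σ)
    (hε1 : -1 < ε) (hε2 : ε < 1) :
    (∫ x : ℝ, (max x 0 - min (max x 0) c) * esnPdf μ σ ε x)
      = (1-ε)^2 * phi ((c-μ)/((1-ε)*σ)) * σ
        - (1-ε) * (1 - Phi ((c-μ)/((1-ε)*σ))) * (c-μ) :=
  stmt10_general μ σ ε c hμ hμc hσ hε2
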